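/- arXiv:2507.14370 — 2 statements merged into one kernel-verified Lean document; each statement's English description precedes it below -/
import Mathlib

section
/- Let π be a permutation matrix that is a product of multi-controlled-NOT gates, let T be the set of qubit wires containing a target of π, and let d_T̄ be a diagonal gate supported only on wires outside T with d_T̄ in the third level of the Clifford Hierarchy. Then for any diagonal gate d_T supported on arbitrary wires, π d_T d_T̄ is in level k of the Clifford Hierarchy if and only if π d_T is in level k, for any k ≥ 3. In particular, π d_T d_T̄ X⃗ d_T̄⁻¹ d_T⁻¹ π⁻¹ = (d_T̄ X⃗ d_T̄⁻¹ X⃗)·(π d_T X⃗ d_T⁻¹ π⁻¹) for every Pauli X string X⃗. -/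
/-!
Both `d_T` and `d_T̄` are diagonal, and `d_T̄` depends only on wires that `π` does not change,
so `d_T̄` commutes with `π d_T`; so does `X d_T̄⁻¹ X`, which is again diagonal and supported off
`T`. Pushing `d_T̄` through therefore gives
`π d_T d_T̄ (X Z) d_T̄⁻¹ d_T⁻¹ π⁻¹ = (d_T̄ X d_T̄⁻¹ X) (π d_T (X Z) d_T⁻¹ π⁻¹)`,
and the first factor is a Clifford since `d_T̄ ∈ CH₃`. Left multiplication by a Clifford preserves
every level `k ≥ 2` of the hierarchy, so `π d_T d_T̄` and `π d_T` conjugate each Pauli into the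
same levels.
-/

/-- Basis states of `n` qubits. -/
abbrev QState (n : ℕ) := Fin n → ZMod 2

/-- `2^n × 2^n` complex matrices, indexed by basis states of `n` qubits. -/
abbrev QMat (n : ℕ) := Matrix (QState n) (QState n) ℂ

noncomputable section

namespace CHPaper

/-- Pauli X string: the permutation matrix adding the vector `v` (bit flips). -/
def XStr {n : ℕ} (v : QState n) : QMat n :=
  Matrix.of fun x y => if x = y + v then (1 : ℂ) else 0

/-- Pauli Z string: diagonal sign matrix determined by the vector `v`. -/
def ZStr {n : ℕ} (v : QState n) : QMat n :=
  Matrix.diagonal fun x => (-1 : ℂ) ^ (ZMod.val (∑ i, v i * x i))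

/-- The `n`-qubit Pauli group (with phases that are fourth roots of unity). -/
def Pauli (n : ℕ) : Set (QMat n) :=
  {M | ∃ (c : ℂ) (v w : QState n), c ^ 4 = 1 ∧ M = c • (XStr v * ZStr w)}

/-- The Clifford Hierarchy: level 1 is the Pauli group, and
`U ∈ CH n (k+1)` iff `U` is unitary and conjugates every Pauli into `CH n k`. -/
def CH (n : ℕ) : ℕ → Set (QMat n)
  | 0 => {1}
  | 1 => Pauli n
  | (k+2) => {U | U ∈ Matrix.unitaryGroup (QState n) ℂ ∧
      ∀ P ∈ Pauli n, U * P * star U ∈ CH n (k+1)}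

/-- Membership in some finite level of the Clifford Hierarchy. -/
def InCH {n : ℕ} (M : QMat n) : Prop := ∃ k, M ∈ CH n k

/-- The permutation matrix of a permutation of basis states. -/
def permMat {n : ℕ} (σ : Equiv.Perm (QState n)) : QMat n :=
  Matrix.of fun x y => if x = σ y then (1 : ℂ) else 0

/-- A matrix is a permutation matrix. -/
def IsPermMat {n : ℕ} (M : QMat n) : Prop :=
  ∃ σ : Equiv.Perm (QState n), M = permMat σ

/-- A monomial (generalized permutation) matrix: exactly one nonzero entry in
each row and column. -/
def IsMonomial {n : ℕ} (M : QMat n) : Prop :=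
  ∃ (σ : Equiv.Perm (QState n)) (d : QState n → ℂ), (∀ x, d x ≠ 0) ∧
    M = Matrix.of fun x y => if x = σ y then d y else 0


theorem mul_mul_mul_eq_commutator_mul {M : Type*} [Monoid M] {u b b' x z : M}
    (hub : Commute u b) (hux : Commute u (x * b' * x)) (hxx : x * x = 1)
    (hzb : Commute z b') :
    u * b * (x * z) * b' = b * x * b' * x * (u * (x * z)) := by
  have hx : x * (x * z) = z := by rw [← mul_assoc, hxx, one_mul]
  calc u * b * (x * z) * b' = b * u * x * (b' * z) := by
        rw [hub.eq, ← hzb.eq]; simp only [mul_assoc]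
    _ = b * u * (x * b' * x) * (x * z) := by simp only [mul_assoc, hx]
    _ = b * x * b' * x * (u * (x * z)) := by
        rw [mul_assoc b u, hux.eq]; simp only [mul_assoc]

theorem _root_.Matrix.IsDiag.commute {ι R : Type*} [Fintype ι] [DecidableEq ι]
    [NonUnitalNonAssocCommSemiring R] {A B : Matrix ι ι R} (hA : A.IsDiag) (hB : B.IsDiag) :
    Commute A B :=
  hA.diagonal_diag ▸ hB.diagonal_diag ▸ Matrix.commute_diagonal _ _

section

open Matrix

variable {n : ℕ}

theorem permMat_eq_permMatrixHom (σ : Equiv.Perm (QState n)) :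
    permMat σ = Matrix.permMatrixHom (R := ℂ) σ := by
  ext x y
  simp [permMat, Equiv.toPEquiv, PEquiv.toMatrix_apply, Equiv.eq_symm_apply, eq_comm]

theorem permMat_mul (σ τ : Equiv.Perm (QState n)) :
    permMat σ * permMat τ = permMat (σ * τ) := by
  simp only [permMat_eq_permMatrixHom, map_mul]

theorem permMat_one : permMat (1 : Equiv.Perm (QState n)) = 1 := by
  simp only [permMat_eq_permMatrixHom, map_one]

theorem star_permMat (σ : Equiv.Perm (QState n)) : star (permMat σ) = permMat σ⁻¹ := by
  simp only [permMat_eq_permMatrixHom, permMatrixHom_apply, star_eq_conjTranspose,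
    conjTranspose_permMatrix]

theorem permMat_mem_unitaryGroup (σ : Equiv.Perm (QState n)) :
    permMat σ ∈ unitaryGroup (QState n) ℂ := by
  rw [mem_unitaryGroup_iff, star_permMat, permMat_mul, mul_inv_cancel, permMat_one]

theorem inv_eq_star_of_mem_unitaryGroup {U : QMat n} (hU : U ∈ unitaryGroup (QState n) ℂ) :
    U⁻¹ = star U :=
  inv_eq_right_inv (mem_unitaryGroup_iff.mp hU)

theorem permMat_mul_diagonal (σ : Equiv.Perm (QState n)) (f : QState n → ℂ) :
    permMat σ * diagonal f = diagonal (f ∘ σ.symm) * permMat σ := by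
  ext x y
  by_cases h : x = σ y <;> simp [permMat, mul_diagonal, diagonal_mul, h]

theorem commute_permMat_diagonal {σ : Equiv.Perm (QState n)} {f : QState n → ℂ}
    (hf : ∀ x, f (σ x) = f x) : Commute (permMat σ) (diagonal f) := by
  have hfσ : f ∘ σ.symm = f := funext fun x => by simpa using (hf (σ.symm x)).symm
  rw [commute_iff_eq, permMat_mul_diagonal, hfσ]

theorem addRight_mul_self (v : QState n) : Equiv.addRight v * Equiv.addRight v = 1 :=
  Equiv.ext fun x => by simp [add_assoc, ZModModule.add_self]

theorem XStr_eq_permMat (v : QState n) : XStr v = permMat (Equiv.addRight v) := rfl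

theorem XStr_mul_self (v : QState n) : XStr v * XStr v = 1 := by
  rw [XStr_eq_permMat, permMat_mul, addRight_mul_self, permMat_one]

theorem star_XStr (v : QState n) : star (XStr v) = XStr v := by
  rw [XStr_eq_permMat, star_permMat, inv_eq_of_mul_eq_one_right (addRight_mul_self v)]

theorem commute_XStr (u v : QState n) : Commute (XStr u) (XStr v) := by
  rw [commute_iff_eq, XStr_eq_permMat, XStr_eq_permMat, permMat_mul, permMat_mul]
  congr 1
  ext x i
  simp [add_right_comm]

theorem XStr_mul_diagonal_mul_XStr (v : QState n) (f : QState n → ℂ) :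
    XStr v * diagonal f * XStr v = diagonal fun x => f (x + v) := by
  rw [XStr_eq_permMat, permMat_mul_diagonal, mul_assoc, ← XStr_eq_permMat, XStr_mul_self,
    mul_one]
  congr 1
  ext x
  simp [ZModModule.neg_eq_self]

theorem neg_one_pow_val_add (a b : ZMod 2) :
    (-1 : ℂ) ^ (a + b).val = (-1) ^ a.val * (-1) ^ b.val := by
  rw [ZMod.val_add, ← neg_one_pow_eq_pow_mod_two, pow_add]

theorem XStr_mul_ZStr_mul_XStr (v w : QState n) :
    XStr v * ZStr w * XStr v = (-1 : ℂ) ^ (∑ i, w i * v i).val • ZStr w := by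
  rw [ZStr, XStr_mul_diagonal_mul_XStr, ← diagonal_smul]
  congr 1
  ext x
  simp [mul_add, Finset.sum_add_distrib, neg_one_pow_val_add, mul_comm]

theorem XStr_mem_Pauli (v : QState n) : XStr v ∈ Pauli n :=
  ⟨1, v, 0, one_pow _, by simp [ZStr]⟩

theorem XStr_mul_mul_XStr_mem_Pauli (v : QState n) {P : QMat n} (hP : P ∈ Pauli n) :
    XStr v * P * XStr v ∈ Pauli n := by
  obtain ⟨c, u, w, hc, rfl⟩ := hP
  set s : ℂ := (-1) ^ (∑ i, w i * v i).val
  have hs : s ^ 4 = 1 := by rw [← pow_mul, mul_comm, pow_mul]; norm_num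
  refine ⟨c * s, u, w, by rw [mul_pow, hc, hs, one_mul], ?_⟩
  calc XStr v * (c • (XStr u * ZStr w)) * XStr v
      = c • (XStr u * (XStr v * ZStr w * XStr v)) := by
        rw [Matrix.mul_smul, Matrix.smul_mul, ← mul_assoc, (commute_XStr v u).eq]
        simp only [mul_assoc]
    _ = (c * s) • (XStr u * ZStr w) := by
        rw [XStr_mul_ZStr_mul_XStr, mul_smul_comm, smul_smul]

theorem XStr_mem_CH_two (v : QState n) : XStr v ∈ CH n 2 :=
  ⟨XStr_eq_permMat v ▸ permMat_mem_unitaryGroup _, fun _ hP => by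
    rw [star_XStr]; exact XStr_mul_mul_XStr_mem_Pauli v hP⟩

theorem Pauli_finite : (Pauli n).Finite := by
  have hroots : {c : ℂ | c ^ 4 = 1}.Finite :=
    (Polynomial.nthRootsFinset 4 (1 : ℂ)).finite_toSet.subset fun c hc => by
      simpa using hc
  refine ((hroots.prod (Set.finite_univ (α := QState n × QState n))).image
    fun p => p.1 • (XStr p.2.1 * ZStr p.2.2)).subset ?_
  rintro _ ⟨c, v, w, hc, rfl⟩
  exact ⟨(c, v, w), ⟨hc, trivial⟩, rfl⟩

theorem star_mem_CH_two {C : QMat n} (hC : C ∈ CH n 2) : star C ∈ CH n 2 := by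
  obtain ⟨hCu, hCP⟩ := hC
  have hCC : star C * C = 1 := mem_unitaryGroup_iff'.mp hCu
  have cancel : ∀ P : QMat n, star C * (C * P * star C) * C = P := fun P => by
    simp only [← mul_assoc, hCC, one_mul]
    rw [mul_assoc, hCC, mul_one]
  refine ⟨Unitary.star_mem hCu, fun Q hQ => ?_⟩
  -- conjugation by `C` is an injective self-map of the finite set `Pauli n`, hence onto
  have hbij : Set.BijOn (fun P => C * P * star C) (Pauli n) (Pauli n) :=
    (Pauli_finite.injOn_iff_bijOn_of_mapsTo hCP).mp fun P _ P' _ h => by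
      simpa only [cancel] using congrArg (fun M => star C * M * C) h
  obtain ⟨P, hP, rfl⟩ := hbij.surjOn hQ
  rwa [star_star, cancel]

theorem mul_mem_CH_two {C D : QMat n} (hC : C ∈ CH n 2) (hD : D ∈ CH n 2) :
    C * D ∈ CH n 2 :=
  ⟨mul_mem hC.1 hD.1, fun P hP => by
    rw [star_mul, ← mul_assoc, mul_assoc C, mul_assoc C]
    exact hC.2 _ (hD.2 P hP)⟩

theorem conj_mem_CH {C : QMat n} (hC : C ∈ CH n 2) :
    ∀ (m : ℕ) {M : QMat n}, M ∈ CH n m → C * M * star C ∈ CH n m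
  | 0, M, hM => by
    rw [Set.mem_singleton_iff.mp hM, mul_one, mem_unitaryGroup_iff.mp hC.1]
    rfl
  | 1, _, hM => hC.2 _ hM
  | k + 2, M, hM => by
    refine ⟨mul_mem (mul_mem hC.1 hM.1) (Unitary.star_mem hC.1), fun P hP => ?_⟩
    have hP' : star C * P * C ∈ Pauli n := by
      have h := (star_mem_CH_two hC).2 P hP
      rwa [star_star] at h
    have hconj : C * M * star C * P * star (C * M * star C) =
        C * (M * (star C * P * C) * star M) * star C := by
      simp only [star_mul, star_star, mul_assoc]
    rw [hconj]
    exact conj_mem_CH hC (k + 1) (hM.2 _ hP')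

theorem mul_mem_CH_of_mem_CH_two {C M : QMat n} (hC : C ∈ CH n 2) (m : ℕ)
    (hM : M ∈ CH n (m + 2)) : C * M ∈ CH n (m + 2) :=
  ⟨mul_mem hC.1 hM.1, fun P hP => by
    rw [star_mul, ← mul_assoc, mul_assoc C, mul_assoc C]
    exact conj_mem_CH hC (m + 1) (hM.2 P hP)⟩

theorem mul_mem_CH_iff {C : QMat n} (hC : C ∈ CH n 2) (m : ℕ) {M : QMat n} :
    C * M ∈ CH n (m + 2) ↔ M ∈ CH n (m + 2) := by
  refine ⟨fun h => ?_, mul_mem_CH_of_mem_CH_two hC m⟩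
  have hM : star C * (C * M) = M := by
    rw [← mul_assoc, mem_unitaryGroup_iff'.mp hC.1, one_mul]
  exact hM ▸ mul_mem_CH_of_mem_CH_two (star_mem_CH_two hC) m h

theorem mem_CH_iff_of_conj_eq_mul {V W : QMat n} (hV : V ∈ unitaryGroup (QState n) ℂ)
    (hW : W ∈ unitaryGroup (QState n) ℂ)
    (hVW : ∀ P ∈ Pauli n, ∃ C ∈ CH n 2, V * P * star V = C * (W * P * star W)) (m : ℕ) :
    V ∈ CH n (m + 3) ↔ W ∈ CH n (m + 3) := by
  refine and_congr (iff_of_true hV hW) (forall₂_congr fun P hP => ?_)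
  obtain ⟨C, hC, h⟩ := hVW P hP
  rw [h]
  exact mul_mem_CH_iff hC m

theorem commute_permMat_diagonal_of_forall_notMem {σ : Equiv.Perm (QState n)}
    {T : Finset (Fin n)} (hT : ∀ (x : QState n) (i : Fin n), i ∉ T → σ x i = x i)
    {f : QState n → ℂ} (hf : ∀ x y : QState n, (∀ i, i ∉ T → x i = y i) → f x = f y) :
    Commute (permMat σ) (diagonal f) :=
  commute_permMat_diagonal fun x => hf _ _ (hT x)

theorem permMat_mul_diag_mul_eq_commutator_mul {σ : Equiv.Perm (QState n)} {T : Finset (Fin n)}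
    (hT : ∀ (x : QState n) (i : Fin n), i ∉ T → σ x i = x i) {dT dTbar : QMat n}
    (hdT : dT.IsDiag) (hdTbar : dTbar.IsDiag)
    (hsupp : ∀ x y : QState n, (∀ i : Fin n, i ∉ T → x i = y i) → dTbar x x = dTbar y y)
    (v : QState n) {z : QMat n} (hz : Commute z (star dTbar)) :
    permMat σ * dT * dTbar * (XStr v * z) * star dTbar =
      dTbar * XStr v * star dTbar * XStr v * (permMat σ * dT * (XStr v * z)) := by
  set f := dTbar.diag
  have hdTbar_eq : dTbar = diagonal f := hdTbar.diagonal_diag.symm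
  have hstar : star dTbar = diagonal (star f) := by
    rw [hdTbar_eq, star_eq_conjTranspose, diagonal_conjTranspose]
  have hshift : XStr v * star dTbar * XStr v = diagonal fun x => star (f (x + v)) := by
    rw [hstar, XStr_mul_diagonal_mul_XStr]; rfl
  have hπ : Commute (permMat σ) dTbar := hdTbar_eq ▸
    commute_permMat_diagonal_of_forall_notMem hT hsupp
  have hπ' : Commute (permMat σ) (XStr v * star dTbar * XStr v) := hshift ▸
    commute_permMat_diagonal_of_forall_notMem hT fun x y hxy => congrArg star <|
      hsupp _ _ fun i hi => by simp [hxy i hi]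
  refine mul_mul_mul_eq_commutator_mul ?_ ?_ (XStr_mul_self v) hz
  · exact hπ.mul_left (hdT.commute hdTbar)
  · exact hπ'.mul_left (hdT.commute (hshift ▸ isDiag_diagonal _))

end

/-- a diagonal gate in CH₃ with no support on the target wires T
of a permutation π can be ignored when determining whether π d is in level k;
moreover the stated commutator identity holds for every Pauli X string. -/
theorem diag_no_target_support_can_be_ignored {n : ℕ}
    (σ : Equiv.Perm (QState n)) (T : Finset (Fin n))
    (hT : ∀ (x : QState n) (i : Fin n), i ∉ T → σ x i = x i)
    (dT dTbar : QMat n)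
    (hdT : dT.IsDiag) (hdTu : dT ∈ Matrix.unitaryGroup (QState n) ℂ)
    (hdTbar : dTbar.IsDiag) (hdTbaru : dTbar ∈ Matrix.unitaryGroup (QState n) ℂ)
    (hsupp : ∀ x y : QState n, (∀ i : Fin n, i ∉ T → x i = y i) →
      dTbar x x = dTbar y y)
    (hdTbar3 : dTbar ∈ CH n 3) :
    (∀ k : ℕ, 3 ≤ k →
      (permMat σ * dT * dTbar ∈ CH n k ↔ permMat σ * dT ∈ CH n k)) ∧
    (∀ v : QState n,
      permMat σ * dT * dTbar * XStr v * dTbar⁻¹ * dT⁻¹ * (permMat σ)⁻¹ =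
        (dTbar * XStr v * dTbar⁻¹ * XStr v) *
          (permMat σ * dT * XStr v * dT⁻¹ * (permMat σ)⁻¹)) := by
  have key := permMat_mul_diag_mul_eq_commutator_mul hT hdT hdTbar hsupp
  have hW : permMat σ * dT ∈ Matrix.unitaryGroup (QState n) ℂ :=
    mul_mem (permMat_mem_unitaryGroup σ) hdTu
  refine ⟨fun k hk => ?_, fun v => ?_⟩
  · obtain ⟨m, rfl⟩ := Nat.exists_eq_add_of_le' hk
    refine mem_CH_iff_of_conj_eq_mul (mul_mem hW hdTbaru) hW ?_ m
    rintro _ ⟨c, v, w, -, rfl⟩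
    have hC : dTbar * XStr v * star dTbar * XStr v ∈ CH n 2 :=
      mul_mem_CH_two (hdTbar3.2 _ (XStr_mem_Pauli v)) (XStr_mem_CH_two v)
    refine ⟨_, hC, ?_⟩
    have hZ : Commute (ZStr w) (star dTbar) :=
      (Matrix.isDiag_diagonal _).commute hdTbar.conjTranspose
    simp only [Matrix.mul_smul, Matrix.smul_mul]
    rw [star_mul _ dTbar, ← mul_assoc, key v hZ, mul_assoc]
  · have h := congrArg (· * (dT⁻¹ * (permMat σ)⁻¹)) (key v (Commute.one_left _))
    simp only [mul_one] at h
    rw [inv_eq_star_of_mem_unitaryGroup hdTbaru]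
    simpa only [mul_assoc] using h
end CHPaper
end
end

section
/- Every 1-wire-mismatch permutation gate is in the Clifford Hierarchy. Precisely, suppose a permutation P₁ on n qubits is written as a finite product of multi-controlled-NOT gates in which exactly one wire (the 'mismatched wire') carries both targets and controls. Then P₁ can be rewritten as X⃗ · H_targ · P · D · H_targ where X⃗ is a Pauli X string, H_targ is a product of Hadamards on the target-support wires, P is a 0-wire-mismatch permutation in the Clifford Hierarchy, and D is a diagonal gate in the Clifford Hierarchy; hence P₁ ∈ 𝒞ℋ. -/
noncomputable section

namespace CHPaper

/-- The action of a multi-controlled NOT with target t, control set S, and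
control polarities p: flip bit t when every control bit matches its polarity. -/
def mcxFun {n : ℕ} (t : Fin n) (S : Finset (Fin n)) (p : QState n)
    (x : QState n) : QState n :=
  if ∀ i ∈ S, x i = p i then Function.update x t (x t + 1) else x

/-- The matrix of a multi-controlled NOT gate. -/
def mcxMat {n : ℕ} (t : Fin n) (S : Finset (Fin n)) (p : QState n) : QMat n :=
  Matrix.of fun x y => if x = mcxFun t S p y then (1 : ℂ) else 0
/-- Hadamard gates applied to the wires in T (identity elsewhere). -/
def Hmat {n : ℕ} (T : Finset (Fin n)) : QMat n :=
  Matrix.of fun x y =>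
    if ∀ i : Fin n, i ∉ T → x i = y i then
      (∏ i ∈ T, (-1 : ℂ) ^ (ZMod.val (x i * y i))) *
        (((Real.sqrt 2 : ℝ) : ℂ))⁻¹ ^ T.card
    else 0

/-!
Let `w` be the mismatched wire and `T` the set of wires targeted by gates controlled on `w`.
No wire of `T` carries a control, so conjugation by the Hadamards `H_T` fixes every gate
targeting outside `T` and turns every gate targeting `T` into a multi-controlled `Z`. Pushing
these diagonal signs to the right gives `H_T P₁ H_T = P D`, where `P` is the product of the
gates targeting outside `T` (a 0-mismatch circuit, so `P |y⟩ = |y + U y⟩` where every value of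
`U` is a period of `U`) and `D` is a diagonal sign.

`P`, `D` and `P D` are all signed shifts `|y⟩ ↦ (-1) ^ f y |y + v + u y⟩`. Conjugating a Pauli
by a signed shift gives a signed shift with `u` replaced by a finite difference of `u`, and, once
`u = 0`, with `f` replaced by a finite difference of `f` plus a linear term. Every function on the
cube `𝔽₂ⁿ` has finite-difference degree at most `n`, so induction on the degree places signed
shifts in a finite level of the hierarchy; `H_T` is a Clifford gate and preserves the levels.
-/

open Matrix

lemma zmod_two_cases (s : ZMod 2) : s = 0 ∨ s = 1 := by
  revert s
  decide

section Sign

def sgn (s : ZMod 2) : ℂ := (-1) ^ s.val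

@[simp] lemma sgn_zero : sgn 0 = 1 := rfl

lemma sgn_add (s t : ZMod 2) : sgn (s + t) = sgn s * sgn t := by
  rw [sgn, sgn, sgn, ZMod.val_add, ← neg_one_pow_eq_pow_mod_two, pow_add]

lemma sgn_sum {ι : Type*} (s : Finset ι) (f : ι → ZMod 2) :
    sgn (∑ i ∈ s, f i) = ∏ i ∈ s, sgn (f i) := by
  induction s using Finset.cons_induction with
  | empty => rfl
  | cons i s hi ih => rw [Finset.sum_cons, Finset.prod_cons, sgn_add, ih]

lemma sgn_mul_self (s : ZMod 2) : sgn s * sgn s = 1 := by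
  rw [← sgn_add, ZModModule.add_self, sgn_zero]

lemma sgn_pow_four (s : ZMod 2) : sgn s ^ 4 = 1 := by
  rw [show sgn s ^ 4 = (sgn s * sgn s) ^ 2 by ring, sgn_mul_self, one_pow]

lemma star_sgn (s : ZMod 2) : star (sgn s) = sgn s := by
  simp [sgn]

end Sign

section Monomial

variable {ι R : Type*} [DecidableEq ι]

def monomialMat [Zero R] (π : ι → ι) (d : ι → R) : Matrix ι ι R :=
  Matrix.of fun x y => if x = π y then d y else 0

lemma monomialMat_apply [Zero R] (π : ι → ι) (d : ι → R) (x y : ι) :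
    monomialMat π d x y = if x = π y then d y else 0 := rfl

lemma monomialMat_id [Zero R] (d : ι → R) : monomialMat id d = diagonal d := by
  ext x y
  by_cases h : x = y <;> simp [monomialMat_apply, h]

variable [Fintype ι]

lemma mul_monomialMat [Semiring R] (N : Matrix ι ι R) (π : ι → ι) (d : ι → R) :
    N * monomialMat π d = Matrix.of fun x z => N x (π z) * d z := by
  ext x z
  simp [mul_apply, monomialMat_apply]

lemma monomialMat_mul [Semiring R] {π : ι → ι} (hπ : Function.Involutive π) (d : ι → R)
    (N : Matrix ι ι R) : monomialMat π d * N = Matrix.of fun x z => d (π x) * N (π x) z := by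
  ext x z
  have hx : ∀ j, x = π j ↔ j = π x := fun j =>
    ⟨fun h => h ▸ (hπ j).symm, fun h => h ▸ (hπ x).symm⟩
  simp [mul_apply, monomialMat_apply, hx]

lemma monomialMat_mul_monomialMat [Semiring R] (π π' : ι → ι) (d d' : ι → R) :
    monomialMat π d * monomialMat π' d'
      = monomialMat (π ∘ π') (fun y => d (π' y) * d' y) := by
  ext x z
  simp [mul_monomialMat, monomialMat_apply]

omit [Fintype ι] in
lemma star_monomialMat [AddMonoid R] [StarAddMonoid R] {π ρ : ι → ι}
    (h₁ : Function.LeftInverse ρ π) (h₂ : Function.RightInverse ρ π) (d : ι → R) :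
    star (monomialMat π d) = monomialMat ρ (fun x => star (d (ρ x))) := by
  ext x y
  simp only [star_apply, monomialMat_apply]
  by_cases h : y = π x
  · rw [if_pos h, if_pos (by rw [h, h₁])]
    subst h
    rw [h₁]
  · rw [if_neg h, if_neg (fun h' => h (by rw [h', h₂])), star_zero]

lemma monomialMat_mem_unitaryGroup [CommRing R] [StarRing R] {π ρ : ι → ι}
    (h₁ : Function.LeftInverse ρ π) (h₂ : Function.RightInverse ρ π) {d : ι → R}
    (hd : ∀ y, d y * star (d y) = 1) : monomialMat π d ∈ unitaryGroup ι R := by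
  rw [mem_unitaryGroup_iff, star_monomialMat h₁ h₂, monomialMat_mul_monomialMat, h₂.id,
    monomialMat_id]
  simp [hd]

end Monomial

section Degree

variable {G α : Type*} [AddCommGroup G] [AddCommGroup α]

def DegLT : ℕ → (G → α) → Prop
  | 0, φ => φ = 0
  | k + 1, φ => ∀ a, DegLT k (fun y => φ (y + a) - φ y)

lemma DegLT.succ {k : ℕ} {φ : G → α} (h : DegLT k φ) : DegLT (k + 1) φ := by
  induction k generalizing φ with
  | zero => intro a; subst h; funext; simp
  | succ k ih => exact fun a => ih (h a)

lemma DegLT.mono {k m : ℕ} (hkm : k ≤ m) {φ : G → α} (h : DegLT k φ) : DegLT m φ := by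
  induction hkm with
  | refl => exact h
  | step _ ih => exact ih.succ

lemma DegLT.add {k : ℕ} {φ ψ : G → α} (hφ : DegLT k φ) (hψ : DegLT k ψ) :
    DegLT k (fun y => φ y + ψ y) := by
  induction k generalizing φ ψ with
  | zero => subst hφ hψ; funext; simp
  | succ k ih =>
    intro a
    convert ih (hφ a) (hψ a) using 2 with y
    exact add_sub_add_comm ..

lemma DegLT.comp_add_right {k : ℕ} {φ : G → α} (h : DegLT k φ) (v : G) :
    DegLT k (fun y => φ (y + v)) := by
  induction k generalizing φ with
  | zero => subst h; rfl
  | succ k ih =>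
    intro a
    convert ih (h a) using 2 with y
    rw [add_right_comm]

lemma DegLT.const_smul {M : Type*} [Monoid M] [DistribMulAction M α] {k : ℕ} {φ : G → α}
    (h : DegLT k φ) (c : M) : DegLT k (fun y => c • φ y) := by
  induction k generalizing φ with
  | zero => subst h; funext; simp
  | succ k ih =>
    intro a
    simpa only [smul_sub] using ih (h a)

lemma DegLT.eq_apply_zero {φ : G → α} (h : DegLT 1 φ) (y : G) : φ y = φ 0 := by
  simpa [sub_eq_zero] using congrFun (h y) 0

lemma degLT_two_of_map_add {φ : G → α} (h : ∀ y z, φ (y + z) = φ y + φ z) :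
    DegLT 2 φ := by
  intro a b
  funext y
  simp [h]

lemma DegLT.coord_smul {ι R : Type*} [Ring R] [Module R α] {k : ℕ} {g : (ι → R) → α}
    (h : DegLT k g) (i : ι) : DegLT (k + 1) (fun y => y i • g y) := by
  induction k generalizing g with
  | zero => subst h; intro a; funext; simp
  | succ k ih =>
    intro a
    have hΔ : (fun y => (y + a) i • g (y + a) - y i • g y)
        = fun y => y i • (g (y + a) - g y) + a i • g (y + a) := by
      funext y
      simp only [Pi.add_apply, add_smul, smul_sub]
      abel
    rw [hΔ]
    exact (ih (h a)).add ((h.comp_add_right a).const_smul (a i))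

end Degree

section Qubits

variable {n : ℕ} {α : Type*} [AddCommGroup α] [Module (ZMod 2) α]

lemma degLT_of_dependsOn (S : Finset (Fin n)) {φ : QState n → α} (h : DependsOn φ S) :
    DegLT (S.card + 1) φ := by
  induction S using Finset.induction_on generalizing φ with
  | empty =>
    intro a
    funext y
    simp [h (x := y + a) (y := y) (by simp)]
  | insert i S hi ih =>
    set φ₀ : QState n → α := fun y => φ (Function.update y i 0)
    set φ₁ : QState n → α := fun y => φ (Function.update y i 1)
    have hdep : ∀ c, DependsOn (fun y => φ (Function.update y i c)) S := fun c y z hyz => by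
      refine h fun j hj => ?_
      rcases eq_or_ne j i with rfl | hji
      · simp
      · simp [hji, hyz j (by simpa [hji] using hj)]
    -- `φ` is affine in the coordinate `y i`
    have hsplit : φ = fun y => φ₀ y + y i • (φ₁ y - φ₀ y) := by
      funext y
      rcases zmod_two_cases (y i) with hy | hy
      · rw [hy, zero_smul, add_zero]
        simp only [φ₀]
        rw [← hy, Function.update_eq_self]
      · rw [hy, one_smul, add_sub_cancel]
        simp only [φ₁]
        rw [← hy, Function.update_eq_self]
    have hdep₁₀ : DependsOn (fun y => φ₁ y - φ₀ y) S := fun y z hyz => by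
      simp only [φ₀, φ₁, hdep 0 hyz, hdep 1 hyz]
    rw [hsplit, Finset.card_insert_of_notMem hi]
    exact (ih (hdep 0)).succ.add ((ih hdep₁₀).coord_smul i)

lemma degLT_qstate (φ : QState n → α) : DegLT (n + 1) φ := by
  simpa using degLT_of_dependsOn Finset.univ (φ := φ) fun y z h => by
    rw [funext fun i => h i (by simp)]

lemma exists_dotProduct_of_degLT_two {f : QState n → ZMod 2} (h : DegLT 2 f) :
    ∃ w : QState n, ∀ y, f y = f 0 + w ⬝ᵥ y := by
  have hadd : ∀ y a, f (y + a) - f 0 = (f y - f 0) + (f a - f 0) := fun y a => by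
    have := (h a).eq_apply_zero y
    simp only [zero_add] at this
    rw [← this]
    ring
  let g : QState n →+ ZMod 2 := AddMonoidHom.mk' (fun y => f y - f 0) hadd
  refine ⟨fun i => g fun j => if i = j then 1 else 0, fun y => ?_⟩
  have hg := LinearMap.pi_apply_eq_sum_univ (g.toZModLinearMap 2) y
  simp only [AddMonoidHom.coe_toZModLinearMap, smul_eq_mul] at hg
  rw [dotProduct, ← sub_eq_iff_eq_add', ← show g y = f y - f 0 from rfl, hg]
  exact Finset.sum_congr rfl fun i _ => mul_comm _ _

end Qubits

section SignedShift

variable {n : ℕ}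

/-- The signed permutation `|y⟩ ↦ (-1) ^ f y |y + v + u y⟩`. -/
def signedShift (v : QState n) (u : QState n → QState n) (f : QState n → ZMod 2) : QMat n :=
  monomialMat (fun y => y + v + u y) (fun y => sgn (f y))

/-- This is what makes `y ↦ y + v + u y` invertible, with inverse `shiftInv v u`. -/
def PeriodicAlongRange (u : QState n → QState n) : Prop :=
  ∀ y z, u (y + u z) = u y

def shiftInv (v : QState n) (u : QState n → QState n) (x : QState n) : QState n :=
  x + v + u (x + v)

lemma periodicAlongRange_zero : PeriodicAlongRange (0 : QState n → QState n) :=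
  fun _ _ => rfl

variable {u : QState n → QState n}

lemma leftInverse_shiftInv (hu : PeriodicAlongRange u) (v : QState n) :
    Function.LeftInverse (shiftInv v u) (fun y => y + v + u y) := fun y => by
  have hv : y + v + u y + v = y + u y := by linear_combination ZModModule.add_self v
  rw [shiftInv, hv, hu]
  linear_combination ZModModule.add_self (u y)

lemma rightInverse_shiftInv (hu : PeriodicAlongRange u) (v : QState n) :
    Function.RightInverse (shiftInv v u) (fun y => y + v + u y) := fun x => by
  simp only [shiftInv]
  rw [hu]
  linear_combination ZModModule.add_self v + ZModModule.add_self (u (x + v))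

lemma star_signedShift (hu : PeriodicAlongRange u) (v : QState n) (f : QState n → ZMod 2) :
    star (signedShift v u f)
      = monomialMat (shiftInv v u) (fun x => sgn (f (shiftInv v u x))) := by
  simp only [signedShift, star_monomialMat (leftInverse_shiftInv hu v)
    (rightInverse_shiftInv hu v), star_sgn]

lemma signedShift_mem_unitaryGroup (hu : PeriodicAlongRange u) (v : QState n)
    (f : QState n → ZMod 2) : signedShift v u f ∈ unitaryGroup (QState n) ℂ :=
  monomialMat_mem_unitaryGroup (leftInverse_shiftInv hu v) (rightInverse_shiftInv hu v)
    fun y => by rw [star_sgn, sgn_mul_self]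

lemma PeriodicAlongRange.conj (hu : PeriodicAlongRange u) (v a : QState n) :
    PeriodicAlongRange fun x => u (x + v) + u (x + v + a) := fun y z => by
  have key : ∀ w, u (w + (u (z + v) + u (z + v + a))) = u w := fun w => by
    rw [← add_assoc, hu, hu]
  simp only [add_right_comm y _ v, add_right_comm (y + v) _ a, key]

lemma signedShift_conj (hu : PeriodicAlongRange u) (v a : QState n) (f g : QState n → ZMod 2) :
    signedShift v u f * signedShift a 0 g * star (signedShift v u f)
      = signedShift a (fun x => u (x + v) + u (x + v + a))
          (fun x => f (shiftInv v u x + a) + f (shiftInv v u x) + g (shiftInv v u x)) := by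
  rw [star_signedShift hu, signedShift, signedShift, monomialMat_mul_monomialMat,
    monomialMat_mul_monomialMat, signedShift]
  congr 1
  · funext x
    have hua : u (shiftInv v u x + a) = u (x + v + a) := by
      rw [shiftInv, add_right_comm, hu]
    simp only [Function.comp, Pi.zero_apply, add_zero, hua]
    rw [shiftInv]
    linear_combination ZModModule.add_self v
  · funext x
    simp only [Pi.zero_apply, add_zero, sgn_add]
    ring

lemma signedShift_mul_signedShift_zero (v : QState n) (u : QState n → QState n)
    (f : QState n → ZMod 2) : signedShift v u 0 * signedShift 0 0 f = signedShift v u f := by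
  simp only [signedShift, monomialMat_mul_monomialMat]
  congr 1 <;> funext y <;> simp

lemma signedShift_zero_zero_isDiag (f : QState n → ZMod 2) : (signedShift 0 0 f).IsDiag := by
  have hid : (fun y => y + 0 + (0 : QState n → QState n) y) = id := by
    funext y
    simp
  rw [signedShift, hid, monomialMat_id]
  exact isDiag_diagonal _

end SignedShift

section Hierarchy

variable {n : ℕ}

lemma XStr_zero : XStr (0 : QState n) = 1 := by
  ext x y
  simp [XStr, one_apply]

lemma XStr_mul_ZStr (v w : QState n) : XStr v * ZStr w = signedShift v 0 (w ⬝ᵥ ·) := by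
  have hX : XStr v = monomialMat (· + v) (fun _ => 1) := rfl
  have hZ : ZStr w = monomialMat id (fun x => sgn (w ⬝ᵥ x)) := by
    rw [monomialMat_id]
    rfl
  rw [hX, hZ, monomialMat_mul_monomialMat, signedShift]
  congr 1 <;> funext y <;> simp

lemma mem_pauli_iff {M : QMat n} : M ∈ Pauli n ↔
    ∃ (c : ℂ) (v w : QState n), c ^ 4 = 1 ∧ M = c • signedShift v 0 (w ⬝ᵥ ·) := by
  simp only [Pauli, Set.mem_ofPred_eq, XStr_mul_ZStr]

lemma smul_signedShift_mem_pauli {c : ℂ} (hc : c ^ 4 = 1) (v : QState n)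
    {f : QState n → ZMod 2} (hf : DegLT 2 f) : c • signedShift v 0 f ∈ Pauli n := by
  obtain ⟨w, hw⟩ := exists_dotProduct_of_degLT_two hf
  have hsplit : signedShift v 0 f = sgn (f 0) • signedShift v 0 (w ⬝ᵥ ·) := by
    ext x y
    simp [signedShift, monomialMat_apply, hw y, sgn_add]
  rw [mem_pauli_iff, hsplit, smul_smul]
  exact ⟨_, v, w, by rw [mul_pow, hc, sgn_pow_four, one_mul], rfl⟩

lemma mul_star_eq_one_of_pow_four {c : ℂ} (hc : c ^ 4 = 1) : c * star c = 1 := by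
  rw [Complex.star_def, Complex.mul_conj', Complex.norm_eq_one_of_pow_eq_one hc (by norm_num)]
  norm_num

lemma smul_mem_CH {c : ℂ} (hc : c ^ 4 = 1) {U : QMat n} :
    ∀ {k : ℕ}, U ∈ CH n (k + 1) → c • U ∈ CH n (k + 1)
  | 0, ⟨c', v, w, hc', hU⟩ =>
    ⟨c * c', v, w, by rw [mul_pow, hc, hc', one_mul], by rw [hU, smul_smul]⟩
  | _ + 1, ⟨hU, hconj⟩ => by
    refine ⟨?_, fun P hP => ?_⟩
    · rw [mem_unitaryGroup_iff, star_smul, smul_mul_smul_comm, mul_star_eq_one_of_pow_four hc,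
        mem_unitaryGroup_iff.mp hU, one_smul]
    · rw [star_smul, smul_mul_assoc, smul_mul_assoc, mul_smul_comm, smul_smul,
        mul_star_eq_one_of_pow_four hc, one_smul]
      exact hconj P hP

lemma conj_mem_CH_s19 {C : QMat n} (hC : C ∈ unitaryGroup (QState n) ℂ)
    (h₁ : ∀ P ∈ Pauli n, C * P * star C ∈ Pauli n)
    (h₂ : ∀ P ∈ Pauli n, star C * P * C ∈ Pauli n) :
    ∀ {k : ℕ} {U : QMat n}, U ∈ CH n k → C * U * star C ∈ CH n k
  | 0, U, hU => by
    rw [show U = 1 from hU, mul_one, mem_unitaryGroup_iff.mp hC]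
    rfl
  | 1, U, hU => h₁ U hU
  | k + 2, U, ⟨hU, hconj⟩ => by
    refine ⟨mul_mem (mul_mem hC hU) (Unitary.star_mem hC), fun P hP => ?_⟩
    have hrw : C * U * star C * P * star (C * U * star C)
        = C * (U * (star C * P * C) * star U) * star C := by
      simp only [star_mul, star_star, mul_assoc]
    rw [hrw]
    exact conj_mem_CH_s19 hC h₁ h₂ (hconj _ (h₂ P hP))

variable {u : QState n → QState n} {v : QState n} {f : QState n → ZMod 2}

lemma signedShift_mem_CH_add_two (hu : PeriodicAlongRange u) {k : ℕ}
    (h : ∀ a b : QState n, signedShift a (fun x => u (x + v) + u (x + v + a))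
      (fun x => f (shiftInv v u x + a) + f (shiftInv v u x) + b ⬝ᵥ shiftInv v u x)
        ∈ CH n (k + 1)) :
    signedShift v u f ∈ CH n (k + 2) := by
  refine ⟨signedShift_mem_unitaryGroup hu v f, fun P hP => ?_⟩
  obtain ⟨c, a, b, hc, rfl⟩ := mem_pauli_iff.mp hP
  rw [mul_smul_comm, smul_mul_assoc, signedShift_conj hu]
  exact smul_mem_CH hc (h a b)

lemma signedShift_zero_mem_CH (k : ℕ) (hf : DegLT (k + 2) f) :
    signedShift v 0 f ∈ CH n (k + 1) := by
  induction k generalizing v f with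
  | zero =>
    show _ ∈ Pauli n
    simpa using smul_signedShift_mem_pauli (one_pow 4) v hf
  | succ k ih =>
    refine signedShift_mem_CH_add_two periodicAlongRange_zero fun a b => ?_
    simp only [Pi.zero_apply, add_zero, shiftInv]
    refine ih ?_
    simp only [← ZModModule.sub_eq_add (f _)]
    exact ((hf a).comp_add_right v).add
      (((degLT_two_of_map_add (dotProduct_add b)).mono (by omega)).comp_add_right v)

lemma signedShift_mem_CH (hu : PeriodicAlongRange u) {k : ℕ} (hk : DegLT k u) :
    signedShift v u f ∈ CH n (n + 1 + k) := by
  induction k generalizing u v f with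
  | zero =>
    subst hk
    exact signedShift_zero_mem_CH n (degLT_qstate f).succ
  | succ k ih =>
    rw [show n + 1 + (k + 1) = n + k + 2 by omega]
    refine signedShift_mem_CH_add_two hu fun a b => ?_
    have hΔ : DegLT k fun x => u (x + v) + u (x + v + a) := by
      simpa only [ZModModule.sub_eq_add, add_comm (u (_ + a))] using (hk a).comp_add_right v
    simpa only [Nat.add_right_comm n 1 k] using ih (hu.conj v a) hΔ

lemma inCH_signedShift (hu : PeriodicAlongRange u) : InCH (signedShift v u f) :=
  ⟨_, signedShift_mem_CH hu (degLT_qstate u)⟩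

end Hierarchy

section PiKronecker

variable {ι κ R : Type*} [Fintype ι] [CommSemiring R]

def piKronecker (m : ι → Matrix κ κ R) : Matrix (ι → κ) (ι → κ) R :=
  Matrix.of fun x y => ∏ i, m i (x i) (y i)

lemma piKronecker_mul [DecidableEq ι] [Fintype κ] (m m' : ι → Matrix κ κ R) :
    piKronecker m * piKronecker m' = piKronecker fun i => m i * m' i := by
  ext x z
  simp only [piKronecker, mul_apply, of_apply, ← Finset.prod_mul_distrib]
  exact (Fintype.prod_sum fun i j => m i (x i) j * m' i j (z i)).symm

lemma piKronecker_one [DecidableEq κ] : piKronecker (fun _ : ι => (1 : Matrix κ κ R)) = 1 := by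
  ext x y
  simp [piKronecker, one_apply, Finset.prod_boole, funext_iff]

end PiKronecker

section Hadamard

variable {n : ℕ}

def hadamard : Matrix (ZMod 2) (ZMod 2) ℂ :=
  Matrix.of fun s t => ((Real.sqrt 2 : ℝ) : ℂ)⁻¹ * sgn (s * t)

lemma inv_sqrt_two_mul_self :
    ((Real.sqrt 2 : ℝ) : ℂ)⁻¹ * ((Real.sqrt 2 : ℝ) : ℂ)⁻¹ = 2⁻¹ := by
  rw [← mul_inv, ← Complex.ofReal_mul, Real.mul_self_sqrt zero_le_two]
  norm_num

lemma hadamard_mul_self : hadamard * hadamard = 1 := by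
  ext s t
  rw [mul_apply, show ∀ f : ZMod 2 → ℂ, ∑ j, f j = f 0 + f 1 from Fin.sum_univ_two]
  simp only [hadamard, of_apply, one_apply]
  have h1 : sgn 1 = -1 := pow_one _
  rcases zmod_two_cases s with rfl | rfl <;> rcases zmod_two_cases t with rfl | rfl <;>
    simp [h1] <;> linear_combination 2 * inv_sqrt_two_mul_self

lemma Hmat_eq_piKronecker (T : Finset (Fin n)) :
    Hmat T = piKronecker fun i => if i ∈ T then hadamard else 1 := by
  ext x y
  have hwire : ∀ i, (if i ∈ T then hadamard else 1) (x i) (y i) =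
      if i ∈ T then ((Real.sqrt 2 : ℝ) : ℂ)⁻¹ * sgn (x i * y i)
      else if x i = y i then 1 else 0 := fun i => by
    split_ifs <;> simp_all [hadamard, one_apply]
  rw [Hmat, piKronecker, of_apply, of_apply, Finset.prod_congr rfl fun i _ => hwire i,
    Finset.prod_ite, Finset.prod_boole, Finset.filter_mem_eq_inter, Finset.univ_inter,
    Finset.prod_mul_distrib, Finset.prod_const]
  simp only [Finset.mem_filter, Finset.mem_univ, true_and, mul_ite, mul_one, mul_zero]
  exact if_congr Iff.rfl (mul_comm _ _) rfl

lemma Hmat_apply (T : Finset (Fin n)) (x y : QState n) :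
    Hmat T x y = if ∀ i ∉ T, x i = y i then
      ((Real.sqrt 2 : ℝ) : ℂ)⁻¹ ^ T.card * sgn (∑ i ∈ T, x i * y i) else 0 := by
  simp only [Hmat, of_apply]
  split_ifs
  · rw [mul_comm, sgn_sum]
    rfl
  · rfl

variable (T : Finset (Fin n))

lemma Hmat_mul_self : Hmat T * Hmat T = 1 := by
  simp only [Hmat_eq_piKronecker, piKronecker_mul, apply_ite₂ (· * ·), hadamard_mul_self,
    one_mul, ite_self, piKronecker_one]

lemma star_Hmat : star (Hmat T) = Hmat T := by
  ext x y
  simp only [star_apply, Hmat_apply, eq_comm (a := y _), mul_comm (y _)]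
  split_ifs <;> simp [star_sgn]

lemma Hmat_mem_unitaryGroup : Hmat T ∈ unitaryGroup (QState n) ℂ := by
  rw [mem_unitaryGroup_iff, star_Hmat, Hmat_mul_self]

lemma Hmat_conj_of_mul_eq {M M' : QMat n} (h : Hmat T * M = M' * Hmat T) :
    Hmat T * M * Hmat T = M' := by
  rw [h, mul_assoc, Hmat_mul_self, mul_one]

lemma Hmat_conj_mul (A B : QMat n) :
    Hmat T * (A * B) * Hmat T = (Hmat T * A * Hmat T) * (Hmat T * B * Hmat T) := by
  simp only [mul_assoc, ← mul_assoc (Hmat T) (Hmat T), Hmat_mul_self, one_mul]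

lemma Hmat_conj_Hmat_conj (M : QMat n) : Hmat T * (Hmat T * M * Hmat T) * Hmat T = M := by
  simp only [← mul_assoc, Hmat_mul_self, one_mul]
  rw [mul_assoc, Hmat_mul_self, mul_one]

lemma sgn_hadamard_swap (s t p q : ZMod 2) :
    sgn (s * (t + p)) * sgn (q * t) = sgn (p * (s + q)) * (sgn (p * q) * sgn ((s + q) * t)) := by
  simp only [← sgn_add]
  congr 1
  revert s t p q
  decide

/-- On the wires of `T`, the Hadamards exchange the `X` and `Z` parts of a Pauli string. -/
lemma Hmat_mul_signedShift (a b : QState n) :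
    Hmat T * signedShift a 0 (b ⬝ᵥ ·) = (sgn (∑ i ∈ T, a i * b i) •
      signedShift (T.piecewise b a) 0 (T.piecewise a b ⬝ᵥ ·)) * Hmat T := by
  have hπ : ∀ c : QState n, (fun y => y + c + (0 : QState n → QState n) y) = (· + c) :=
    fun c => by simp
  have hinv : ∀ c : QState n, Function.Involutive (· + c) := fun c y => by
    simp [add_assoc, ZModModule.add_self]
  rw [smul_mul_assoc, signedShift, signedShift, hπ, hπ, mul_monomialMat,
    monomialMat_mul (hinv _), Hmat_eq_piKronecker]
  ext x z
  have hT : ∏ i ∈ T, sgn (a i * b i) = ∏ i, if i ∈ T then sgn (a i * b i) else 1 := by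
    rw [Finset.prod_ite_mem, Finset.univ_inter]
  simp only [of_apply, Matrix.smul_apply, smul_eq_mul, piKronecker, dotProduct, sgn_sum, hT,
    ← Finset.prod_mul_distrib]
  refine Finset.prod_congr rfl fun i _ => ?_
  by_cases hi : i ∈ T
  · simp only [hi, if_true, Finset.piecewise_eq_of_mem _ _ _ hi, hadamard, of_apply,
      Pi.add_apply]
    rw [mul_assoc, sgn_hadamard_swap]
    ring
  · simp only [hi, if_false, Finset.piecewise_eq_of_notMem _ _ _ hi, one_apply, Pi.add_apply,
      ite_mul, mul_ite, zero_mul, mul_zero, one_mul, mul_one]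
    have hiff : x i = z i + a i ↔ x i + a i = z i := by
      rw [← ZModModule.sub_eq_add, eq_sub_iff_add_eq]
    split_ifs with h₁ h₂ h₂
    · rw [← h₂]
    · exact absurd (hiff.mp h₁) h₂
    · exact absurd (hiff.mpr h₂) h₁
    · rfl

lemma Hmat_conj_mem_pauli {P : QMat n} (hP : P ∈ Pauli n) : Hmat T * P * Hmat T ∈ Pauli n := by
  obtain ⟨c, a, b, hc, rfl⟩ := mem_pauli_iff.mp hP
  rw [mul_smul_comm, smul_mul_assoc, Hmat_conj_of_mul_eq T (Hmat_mul_signedShift T a b),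
    smul_smul]
  exact mem_pauli_iff.mpr ⟨_, _, _, by rw [mul_pow, hc, sgn_pow_four, one_mul], rfl⟩

lemma Hmat_conj_mem_CH {k : ℕ} {U : QMat n} (hU : U ∈ CH n k) :
    Hmat T * U * Hmat T ∈ CH n k := by
  have hH : ∀ P ∈ Pauli n, Hmat T * P * star (Hmat T) ∈ Pauli n := fun P hP => by
    rw [star_Hmat]
    exact Hmat_conj_mem_pauli T hP
  simpa only [star_Hmat] using
    conj_mem_CH_s19 (Hmat_mem_unitaryGroup T) hH (by simpa only [star_Hmat] using hH) hU

lemma Hmat_mul_monomialMat_comm {π : QState n → QState n} (hπ : Function.Involutive π)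
    (hT : ∀ y, ∀ i ∈ T, π y i = y i)
    (hoff : ∀ x y, (∀ i ∉ T, x i = y i) → ∀ i ∉ T, π x i = π y i) :
    Hmat T * monomialMat π 1 = monomialMat π 1 * Hmat T := by
  rw [mul_monomialMat, monomialMat_mul hπ]
  ext x z
  simp only [of_apply, Pi.one_apply, mul_one, one_mul, Hmat_apply]
  have hsum : ∑ i ∈ T, x i * π z i = ∑ i ∈ T, π x i * z i :=
    Finset.sum_congr rfl fun i hi => by rw [hT z i hi, hT x i hi]
  have hcond : (∀ i ∉ T, x i = π z i) ↔ ∀ i ∉ T, π x i = z i :=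
    ⟨fun h i hi => by rw [hoff x (π z) h i hi, hπ],
     fun h i hi => by rw [← hoff (π x) z h i hi, hπ]⟩
  rw [hsum]
  exact if_congr hcond rfl rfl

end Hadamard

section Gates

variable {n : ℕ}

def ctrl (S : Finset (Fin n)) (p y : QState n) : ZMod 2 :=
  if ∀ i ∈ S, y i = p i then 1 else 0

lemma ctrl_congr {S : Finset (Fin n)} {p x y : QState n} (h : ∀ i ∈ S, x i = y i) :
    ctrl S p x = ctrl S p y :=
  if_congr (forall₂_congr fun i hi => by rw [h i hi]) rfl rfl

lemma mcxFun_eq (t : Fin n) (S : Finset (Fin n)) (p y : QState n) :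
    mcxFun t S p y = y + Pi.single t (ctrl S p y) := by
  unfold mcxFun ctrl
  split_ifs
  · ext i
    rcases eq_or_ne i t with rfl | h
    · simp
    · simp [h]
  · simp

lemma mcxMat_eq (t : Fin n) (S : Finset (Fin n)) (p : QState n) :
    mcxMat t S p = monomialMat (mcxFun t S p) 1 := rfl

variable {t : Fin n} {S : Finset (Fin n)} {p : QState n}

lemma mcxFun_involutive (htS : t ∉ S) : Function.Involutive (mcxFun t S p) := fun y => by
  have hc : ctrl S p (y + Pi.single t (ctrl S p y)) = ctrl S p y :=
    ctrl_congr fun i hi => by simp [Pi.single_eq_of_ne (ne_of_mem_of_not_mem hi htS)]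
  rw [mcxFun_eq, mcxFun_eq, hc, add_assoc, ← Pi.single_add, ZModModule.add_self, Pi.single_zero,
    add_zero]

variable (T : Finset (Fin n))

lemma Hmat_mul_mcxMat_comm (htS : t ∉ S) (ht : t ∉ T) (hS : ∀ i ∈ S, i ∉ T) :
    Hmat T * mcxMat t S p = mcxMat t S p * Hmat T :=
  Hmat_mul_monomialMat_comm T (mcxFun_involutive htS)
    (fun y i hi => by simp [mcxFun_eq, Pi.single_eq_of_ne (ne_of_mem_of_not_mem hi ht)])
    fun x y hxy i hi => by
      simp only [mcxFun_eq, Pi.add_apply, hxy i hi, ctrl_congr fun j hj => hxy j (hS j hj)]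

/-- Under the Hadamard on its target, a multi-controlled NOT becomes a multi-controlled `Z`. -/
lemma Hmat_mul_mcxMat (ht : t ∈ T) (hS : ∀ i ∈ S, i ∉ T) :
    Hmat T * mcxMat t S p = monomialMat id (fun x => sgn (ctrl S p x * x t)) * Hmat T := by
  rw [mcxMat_eq, mul_monomialMat,
    monomialMat_mul (fun _ => rfl : Function.Involutive (id : QState n → QState n))]
  ext x z
  have hoff : ∀ i ∉ T, (Pi.single t (ctrl S p z) : QState n) i = 0 := fun i hi =>
    Pi.single_eq_of_ne (ne_of_mem_of_not_mem ht hi).symm _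
  simp only [of_apply, Pi.one_apply, mul_one, id, Hmat_apply, mcxFun_eq, Pi.add_apply]
  by_cases h : ∀ i ∉ T, x i = z i
  · have hc : ctrl S p z = ctrl S p x := ctrl_congr fun i hi => (h i (hS i hi)).symm
    rw [if_pos fun i hi => by rw [hoff i hi, add_zero, h i hi], if_pos h]
    simp only [mul_add, Finset.sum_add_distrib, Pi.single_apply, mul_ite, mul_zero,
      Finset.sum_ite_eq', if_pos ht, sgn_add, hc, mul_comm (x t)]
    ring
  · rw [if_neg fun h' => h fun i hi => by rw [h' i hi, hoff i hi, add_zero], if_neg h, mul_zero]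

end Gates

section GateLists

variable {n : ℕ}

/-- A multi-controlled NOT as `(target, controls, polarities)`. -/
abbrev Gate (n : ℕ) := Fin n × Finset (Fin n) × QState n

def gatesFun : List (Gate n) → QState n → QState n
  | [] => id
  | g :: L => mcxFun g.1 g.2.1 g.2.2 ∘ gatesFun L

lemma prod_map_mcxMat (L : List (Gate n)) :
    (L.map fun g => mcxMat g.1 g.2.1 g.2.2).prod = monomialMat (gatesFun L) 1 := by
  induction L with
  | nil => simp [gatesFun, monomialMat_id]
  | cons g L ih =>
    rw [List.map_cons, List.prod_cons, ih, mcxMat_eq, monomialMat_mul_monomialMat]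
    simp only [gatesFun, Pi.one_apply, mul_one]
    rfl

def gatesShift (L : List (Gate n)) (y : QState n) : QState n :=
  (L.map fun g => Pi.single g.1 (ctrl g.2.1 g.2.2 y)).sum

lemma gatesShift_cons (g : Gate n) (L : List (Gate n)) (y : QState n) :
    gatesShift (g :: L) y = Pi.single g.1 (ctrl g.2.1 g.2.2 y) + gatesShift L y := by
  simp [gatesShift]

lemma gatesShift_apply_eq_zero {L : List (Gate n)} {i : Fin n} (hi : ∀ g ∈ L, g.1 ≠ i)
    (y : QState n) : gatesShift L y i = 0 := by
  rw [gatesShift, Pi.list_sum_apply, List.map_map]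
  exact List.sum_eq_zero fun s hs => by
    obtain ⟨g, hg, rfl⟩ := List.mem_map.mp hs
    exact Pi.single_eq_of_ne (hi g hg).symm _

lemma ctrl_add_gatesShift {L : List (Gate n)} {S : Finset (Fin n)} (hS : ∀ g ∈ L, g.1 ∉ S)
    (p y z : QState n) : ctrl S p (y + gatesShift L z) = ctrl S p y :=
  ctrl_congr fun i hi => by
    rw [Pi.add_apply, gatesShift_apply_eq_zero (fun g hg h => hS g hg (h ▸ hi)), add_zero]

variable {L : List (Gate n)} (h₀ : ∀ g ∈ L, ∀ h ∈ L, g.1 ∉ h.2.1)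
include h₀

lemma periodicAlongRange_gatesShift : PeriodicAlongRange (gatesShift L) := fun y z => by
  simp only [gatesShift]
  congr 1
  exact List.map_congr_left fun h hh => by
    rw [← gatesShift, ctrl_add_gatesShift fun g hg => h₀ g hg h hh]

/-- Without mismatched wires, the gates of `L` act independently of each other. -/
lemma gatesFun_eq_add_gatesShift (y : QState n) : gatesFun L y = y + gatesShift L y := by
  induction L with
  | nil => simp [gatesFun, gatesShift]
  | cons g L ih =>
    have h₀' : ∀ g ∈ L, ∀ h ∈ L, g.1 ∉ h.2.1 := fun g' hg' h hh =>
      h₀ g' (List.mem_cons_of_mem _ hg') h (List.mem_cons_of_mem _ hh)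
    have hg : ∀ g' ∈ L, g'.1 ∉ g.2.1 := fun g' hg' =>
      h₀ g' (List.mem_cons_of_mem _ hg') g List.mem_cons_self
    rw [gatesFun, Function.comp_apply, ih h₀', mcxFun_eq, ctrl_add_gatesShift hg, gatesShift_cons,
      add_assoc, add_comm (gatesShift _ _)]

lemma monomialMat_gatesFun (f : QState n → ZMod 2) :
    monomialMat (gatesFun L) (fun y => sgn (f y)) = signedShift 0 (gatesShift L) f := by
  rw [signedShift]
  congr
  funext y
  rw [gatesFun_eq_add_gatesShift h₀, add_zero]

lemma prod_map_mcxMat_eq_signedShift :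
    (L.map fun g => mcxMat g.1 g.2.1 g.2.2).prod = signedShift 0 (gatesShift L) 0 := by
  rw [prod_map_mcxMat, ← monomialMat_gatesFun h₀]
  rfl

end GateLists

section OneMismatch

variable {n : ℕ}

lemma exists_Hmat_conj_prod_mcxMat (T : Finset (Fin n)) (L : List (Gate n))
    (hwf : ∀ g ∈ L, g.1 ∉ g.2.1) (hT : ∀ g ∈ L, ∀ i ∈ g.2.1, i ∉ T) :
    ∃ F : QState n → ZMod 2, Hmat T * (L.map fun g => mcxMat g.1 g.2.1 g.2.2).prod * Hmat T
      = monomialMat (gatesFun (L.filter fun g => g.1 ∉ T)) (fun y => sgn (F y)) := by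
  induction L with
  | nil => exact ⟨0, by simp [Hmat_mul_self, gatesFun, monomialMat_id]⟩
  | cons g L ih =>
    obtain ⟨F, hF⟩ := ih (fun g hg => hwf g (List.mem_cons_of_mem _ hg))
      fun g hg => hT g (List.mem_cons_of_mem _ hg)
    rw [List.map_cons, List.prod_cons, Hmat_conj_mul, hF]
    by_cases hg : g.1 ∈ T
    · set ψ := gatesFun (L.filter fun g => g.1 ∉ T)
      refine ⟨fun y => ctrl g.2.1 g.2.2 (ψ y) * ψ y g.1 + F y, ?_⟩
      rw [Hmat_conj_of_mul_eq T (Hmat_mul_mcxMat T hg (hT g List.mem_cons_self)),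
        monomialMat_mul_monomialMat, List.filter_cons_of_neg (by simpa using hg)]
      simp only [sgn_add, Function.id_comp]
      rfl
    · refine ⟨F, ?_⟩
      rw [Hmat_conj_of_mul_eq T
          (Hmat_mul_mcxMat_comm T (hwf g List.mem_cons_self) hg (hT g List.mem_cons_self)),
        mcxMat_eq, monomialMat_mul_monomialMat, List.filter_cons_of_pos (by simpa using hg)]
      simp only [gatesFun, Pi.one_apply, one_mul]

def IsMismatched (L : List (Gate n)) (w : Fin n) : Prop :=
  (∃ g ∈ L, g.1 = w) ∧ ∃ h ∈ L, w ∈ h.2.1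

def targetSupport (L : List (Gate n)) (w : Fin n) : Finset (Fin n) :=
  ((L.filter fun g => w ∈ g.2.1).map Prod.fst).toFinset

lemma mem_targetSupport {L : List (Gate n)} {w t : Fin n} :
    t ∈ targetSupport L w ↔ ∃ g ∈ L, w ∈ g.2.1 ∧ g.1 = t := by
  simp [targetSupport, and_assoc]

variable {L : List (Gate n)} {w : Fin n} (huniq : ∀ w', IsMismatched L w' → w' = w)
include huniq

lemma notMem_controls_of_mem_targetSupport (hwf : ∀ g ∈ L, g.1 ∉ g.2.1) {t : Fin n}
    (ht : t ∈ targetSupport L w) {h : Gate n} (hh : h ∈ L) : t ∉ h.2.1 := fun hth => by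
  obtain ⟨g, hg, hwg, rfl⟩ := mem_targetSupport.mp ht
  obtain rfl := huniq g.1 ⟨⟨g, hg, rfl⟩, h, hh, hth⟩
  exact hwf g hg hwg

lemma filter_notMem_targetSupport_zero_mismatch :
    ∀ g ∈ L.filter (fun g => g.1 ∉ targetSupport L w),
      ∀ h ∈ L.filter (fun g => g.1 ∉ targetSupport L w), g.1 ∉ h.2.1 := by
  intro g hg h hh hgh
  simp only [List.mem_filter, decide_eq_true_eq] at hg hh
  obtain rfl := huniq g.1 ⟨⟨g, hg.1, rfl⟩, h, hh.1, hgh⟩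
  exact hh.2 (mem_targetSupport.mpr ⟨h, hh.1, hgh, rfl⟩)

end OneMismatch

/-- every 1-wire-mismatch permutation gate P₁ can be rewritten
as X⃗ · H_targ · P · D · H_targ with P a 0-wire-mismatch permutation in the
Clifford Hierarchy and D a diagonal gate in the Clifford Hierarchy; hence
P₁ is in the Clifford Hierarchy. -/
theorem one_wire_mismatch_in_CH {n : ℕ}
    (L : List (Fin n × Finset (Fin n) × QState n)) (P₁ : QMat n)
    (hwf : ∀ g ∈ L, g.1 ∉ g.2.1)
    (hP₁ : P₁ = (L.map fun g => mcxMat g.1 g.2.1 g.2.2).prod)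
    (hmm : ∃! w : Fin n,
      (∃ g ∈ L, g.1 = w) ∧ ∃ h ∈ L, w ∈ h.2.1) :
    ∃ (v : QState n) (T : Finset (Fin n)) (P D : QMat n),
      (∃ L' : List (Fin n × Finset (Fin n) × QState n),
        (∀ g ∈ L', ∀ h ∈ L', g.1 ∉ h.2.1) ∧
        P = (L'.map fun g => mcxMat g.1 g.2.1 g.2.2).prod) ∧
      InCH P ∧ D.IsDiag ∧ InCH D ∧
      P₁ = XStr v * Hmat T * P * D * Hmat T ∧ InCH P₁ := by
  obtain ⟨w, -, huniq⟩ := hmm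
  set T := targetSupport L w
  set L' := L.filter fun g => g.1 ∉ T
  have h₀ := filter_notMem_targetSupport_zero_mismatch huniq
  have hU := periodicAlongRange_gatesShift h₀
  obtain ⟨F, hF⟩ := exists_Hmat_conj_prod_mcxMat T L hwf
    fun g hg i hi hiT => notMem_controls_of_mem_targetSupport huniq hwf hiT hg hi
  have hconj : P₁ = Hmat T * signedShift 0 (gatesShift L') F * Hmat T := by
    rw [← monomialMat_gatesFun h₀, ← hF, Hmat_conj_Hmat_conj, hP₁]
  refine ⟨0, T, _, signedShift 0 0 F, ⟨L', h₀, rfl⟩, ?_, signedShift_zero_zero_isDiag F,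
    inCH_signedShift periodicAlongRange_zero, ?_, ?_⟩
  · rw [prod_map_mcxMat_eq_signedShift h₀]
    exact inCH_signedShift hU
  · rw [prod_map_mcxMat_eq_signedShift h₀, XStr_zero, one_mul, mul_assoc (Hmat T),
      signedShift_mul_signedShift_zero, hconj]
  · obtain ⟨k, hk⟩ := inCH_signedShift hU (v := 0) (f := F)
    exact ⟨k, hconj ▸ Hmat_conj_mem_CH T hk⟩

end CHPaper
end
end
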